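/- arXiv:2604.25956 — 2 statements merged into one kernel-verified Lean document; each statement's English description precedes it below -/
import Mathlib

section
/- Let T be an acute lattice triangle whose circumcenter is a lattice point, and let ℓ₀ ≤ ℓ₁ ≤ ℓ₂ be the lattice lengths of its sides in increasing order. Then ℓ₁ ≥ 3. -/
/-- Lattice length of the segment joining two lattice points. -/
def llen (P Q : ℤ × ℤ) : ℕ := Int.gcd (P.1 - Q.1) (P.2 - Q.2)

/-- Integer dot product on `ℤ × ℤ`. -/
def dotv (u v : ℤ × ℤ) : ℤ := u.1 * v.1 + u.2 * v.2

/-- The three vertices are not collinear (a genuine triangle). -/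
def Noncollinear (V₀ V₁ V₂ : ℤ × ℤ) : Prop :=
  (V₁.1 - V₀.1) * (V₂.2 - V₀.2) - (V₂.1 - V₀.1) * (V₁.2 - V₀.2) ≠ 0

/-- All three interior angles are strictly acute (positive dot products at each vertex). -/
def IsAcute (V₀ V₁ V₂ : ℤ × ℤ) : Prop :=
  0 < dotv (V₁ - V₀) (V₂ - V₀) ∧ 0 < dotv (V₀ - V₁) (V₂ - V₁) ∧
    0 < dotv (V₀ - V₂) (V₁ - V₂)

/-- `H` is the orthocenter of the triangle `V₀V₁V₂`. -/
def IsOrthocenter (H V₀ V₁ V₂ : ℤ × ℤ) : Prop :=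
  dotv (H - V₀) (V₁ - V₂) = 0 ∧ dotv (H - V₁) (V₂ - V₀) = 0 ∧
    dotv (H - V₂) (V₀ - V₁) = 0

/-- `F` is the circumcenter of the triangle `V₀V₁V₂` (equidistant from the vertices). -/
def IsCircumcenter (F V₀ V₁ V₂ : ℤ × ℤ) : Prop :=
  dotv (F - V₀) (F - V₀) = dotv (F - V₁) (F - V₁) ∧
    dotv (F - V₀) (F - V₀) = dotv (F - V₂) (F - V₂)

/-- Lattice perimeter of a lattice triangle. -/
def latPerim (V₀ V₁ V₂ : ℤ × ℤ) : ℕ := llen V₀ V₁ + llen V₁ V₂ + llen V₀ V₂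

/-- The interior angle of the triangle at vertex `V`, with the other vertices `A`, `B`. -/
noncomputable def angleAt (V A B : ℤ × ℤ) : ℝ :=
  Real.arccos ((((A.1 - V.1) * (B.1 - V.1) + (A.2 - V.2) * (B.2 - V.2) : ℤ) : ℝ) /
    (Real.sqrt (((A.1 - V.1) ^ 2 + (A.2 - V.2) ^ 2 : ℤ)) *
      Real.sqrt (((B.1 - V.1) ^ 2 + (B.2 - V.2) ^ 2 : ℤ))))

/-!
Suppose both sides at `V₂` have lattice length at most `2`. Put `V₂` at the origin, let `a`, `b`
be the other two vertices and `O` the circumcenter, so that `2 O·a = |a|²` and `2 O·b = |b|²`. The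
vector `2O - a` is an integral vector orthogonal to `a`, nonzero because the angle at `V₁` is not
right. Since the lattice length `d` of `a` is at most `2`, it divides `2O - a`, and an integral
vector orthogonal to `a` and divisible by its lattice length is at least as long as `a`. This
gives `|a|² ≤ 2|O|²`: the angle at `V₁` is at most `π/4`. The same holds for `b` and the angle at
`V₀`, so the angle at `V₂` is at least `π/2`. With `q = a × b`, the two angle bounds read
`|q| ≤ |b|² - a·b` and `|q| ≤ |a|² - a·b`, which together with `q² = |a|²|b|² - (a·b)²` force
`|a|² + |b|² ≤ 2 a·b`, contradicting acuteness.
-/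

def crossv (u v : ℤ × ℤ) : ℤ := u.1 * v.2 - u.2 * v.1

lemma sq_crossv_add_sq_dotv (u v : ℤ × ℤ) :
    crossv u v ^ 2 + dotv u v ^ 2 = dotv u u * dotv v v := by
  simp only [crossv, dotv]; ring

lemma dotv_self_nonneg (u : ℤ × ℤ) : 0 ≤ dotv u u :=
  add_nonneg (mul_self_nonneg u.1) (mul_self_nonneg u.2)

lemma dotv_comm (u v : ℤ × ℤ) : dotv u v = dotv v u := by
  simp only [dotv]; ring

lemma crossv_anticomm (u v : ℤ × ℤ) : crossv v u = -crossv u v := by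
  simp only [crossv]; ring

lemma crossv_mul_crossv (a u v : ℤ × ℤ) :
    crossv a u * crossv a v = dotv a a * dotv u v - dotv a v * dotv a u := by
  simp only [crossv, dotv]; ring

lemma exists_eq_mul_perp_of_isCoprime {e₁ e₂ : ℤ} (he : IsCoprime e₁ e₂) {w : ℤ × ℤ}
    (hw : e₁ * w.1 + e₂ * w.2 = 0) : ∃ m : ℤ, w = (-(m * e₂), m * e₁) := by
  obtain ⟨u, v, huv⟩ := he
  refine ⟨u * w.2 - v * w.1, Prod.ext ?_ ?_⟩
  · linear_combination (-w.1) * huv + u * hw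
  · linear_combination (-w.2) * huv + v * hw

lemma dotv_self_le_of_dotv_eq_zero {a w : ℤ × ℤ} (hw : w ≠ 0) (horth : dotv a w = 0)
    (h₁ : (Int.gcd a.1 a.2 : ℤ) ∣ w.1) (h₂ : (Int.gcd a.1 a.2 : ℤ) ∣ w.2) :
    dotv a a ≤ dotv w w := by
  rcases Nat.eq_zero_or_pos (Int.gcd a.1 a.2) with hd | hd
  · rw [hd, Nat.cast_zero, zero_dvd_iff] at h₁ h₂
    exact absurd (Prod.ext h₁ h₂) hw
  obtain ⟨e₁, e₂, he, ha₁, ha₂⟩ := Int.exists_gcd_one hd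
  set d : ℤ := (Int.gcd a.1 a.2 : ℤ)
  have hd' : 0 < d := Int.natCast_pos.mpr hd
  have horth' : e₁ * w.1 + e₂ * w.2 = 0 := by
    have : d * (e₁ * w.1 + e₂ * w.2) = 0 := by
      rw [← horth, dotv, ha₁, ha₂]; ring
    exact (mul_eq_zero.mp this).resolve_left hd'.ne'
  have hcop : IsCoprime e₁ e₂ := Int.isCoprime_iff_gcd_eq_one.mpr he
  obtain ⟨m, rfl⟩ := exists_eq_mul_perp_of_isCoprime hcop horth'
  have hm : m ≠ 0 := by rintro rfl; simp at hw
  have hdm : d ∣ m := by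
    obtain ⟨u, v, huv⟩ := hcop
    have : m = u * (m * e₁) - v * (-(m * e₂)) := by linear_combination -m * huv
    rw [this]
    exact dvd_sub (dvd_mul_of_dvd_right h₂ u) (dvd_mul_of_dvd_right h₁ v)
  have hdm' : d ^ 2 ≤ m ^ 2 := by
    rw [← sq_abs m]
    exact pow_le_pow_left₀ hd'.le (Int.le_of_dvd (abs_pos.mpr hm) ((dvd_abs d m).mpr hdm)) 2
  calc dotv a a = d ^ 2 * (e₁ ^ 2 + e₂ ^ 2) := by rw [dotv, ha₁, ha₂]; ring
    _ ≤ m ^ 2 * (e₁ ^ 2 + e₂ ^ 2) := by gcongr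
    _ = dotv (-(m * e₂), m * e₁) (-(m * e₂), m * e₁) := by rw [dotv]; ring

section Circumcenter

variable {a b O : ℤ × ℤ}

lemma ne_two_smul_of_dotv_lt (hb : 2 * dotv O b = dotv b b) (hab : dotv a b < dotv b b) :
    a ≠ 2 • O := by
  rintro rfl
  have : dotv (2 • O) b = 2 * dotv O b := by
    simp only [dotv, Prod.smul_fst, Prod.smul_snd]; ring
  linarith

lemma dotv_self_le_two_mul_dotv_self (ha : 2 * dotv O a = dotv a a) (hg : Int.gcd a.1 a.2 ≤ 2)
    (hmid : a ≠ 2 • O) : dotv a a ≤ 2 * dotv O O := by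
  have hw : 2 • O - a ≠ 0 := sub_ne_zero.mpr hmid.symm
  have horth : dotv a (2 • O - a) = 0 := by
    rw [← sub_eq_zero.mpr ha]; simp only [dotv, Prod.fst_sub, Prod.snd_sub, Prod.smul_fst,
      Prod.smul_snd]; ring
  rcases Nat.eq_zero_or_pos (Int.gcd a.1 a.2) with hd | hd
  · obtain ⟨h₁, h₂⟩ := Int.gcd_eq_zero_iff.mp hd
    have : dotv a a = 0 := by simp [dotv, h₁, h₂]
    linarith [dotv_self_nonneg O]
  have hdvd : ∀ x y : ℤ, (Int.gcd a.1 a.2 : ℤ) ∣ x → (Int.gcd a.1 a.2 : ℤ) ∣ 2 * y - x := by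
    intro x y hx
    interval_cases h : Int.gcd a.1 a.2
    · exact one_dvd _
    · exact dvd_sub (dvd_mul_right 2 y) hx
  have key := dotv_self_le_of_dotv_eq_zero hw horth
    (hdvd _ O.1 (Int.gcd_dvd_left _ _)) (hdvd _ O.2 (Int.gcd_dvd_right _ _))
  have : dotv (2 • O - a) (2 • O - a) = 4 * dotv O O - 4 * dotv O a + dotv a a := by
    simp only [dotv, Prod.fst_sub, Prod.snd_sub, Prod.smul_fst, Prod.smul_snd]; ring
  linarith

/-- The angle at `b` of the triangle `0, a, b` is at most `π/4`. -/
lemma sq_crossv_le_of_dotv_self_le (ha : 2 * dotv O a = dotv a a)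
    (hb : 2 * dotv O b = dotv b b) (ha₀ : 0 < dotv a a) (hR : dotv a a ≤ 2 * dotv O O) :
    crossv a b ^ 2 ≤ (dotv b b - dotv a b) ^ 2 := by
  have hcross : 2 * crossv a O * crossv a b = dotv a a * (dotv b b - dotv a b) := by
    linear_combination 2 * crossv_mul_crossv a O b + dotv a a * hb - dotv a b * ha
      - 2 * dotv a b * dotv_comm a O
  have hlagrange := sq_crossv_add_sq_dotv a O
  rw [dotv_comm a O] at hlagrange
  have hc : dotv a a ^ 2 ≤ 4 * crossv a O ^ 2 := by
    nlinarith [mul_le_mul_of_nonneg_left hR ha₀.le]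
  have : dotv a a ^ 2 * crossv a b ^ 2 ≤ dotv a a ^ 2 * (dotv b b - dotv a b) ^ 2 :=
    calc dotv a a ^ 2 * crossv a b ^ 2 ≤ 4 * crossv a O ^ 2 * crossv a b ^ 2 := by gcongr
      _ = (dotv a a * (dotv b b - dotv a b)) ^ 2 := by rw [← hcross]; ring
      _ = dotv a a ^ 2 * (dotv b b - dotv a b) ^ 2 := by ring
  exact le_of_mul_le_mul_left this (by positivity)

end Circumcenter

lemma false_of_sq_crossv_le {a b : ℤ × ℤ} (hs : 0 < dotv a b) (hsa : dotv a b < dotv a a)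
    (hsb : dotv a b < dotv b b) (h₁ : crossv a b ^ 2 ≤ (dotv b b - dotv a b) ^ 2)
    (h₂ : crossv a b ^ 2 ≤ (dotv a a - dotv a b) ^ 2) : False := by
  have hq : crossv a b ^ 2 ≤ (dotv a a - dotv a b) * (dotv b b - dotv a b) := by
    rw [← sq_abs, sq]
    exact mul_le_mul (abs_le_of_sq_le_sq h₂ (by linarith)) (abs_le_of_sq_le_sq h₁ (by linarith))
      (abs_nonneg _) (by linarith)
  have hsum : 0 < dotv a a + dotv b b - 2 * dotv a b := by linarith
  nlinarith [sq_crossv_add_sq_dotv a b, mul_pos hs hsum]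

lemma IsCircumcenter.two_mul_dotv_eq {F V₀ V₁ V₂ : ℤ × ℤ} (hF : IsCircumcenter F V₀ V₁ V₂) :
    2 * dotv (F - V₂) (V₀ - V₂) = dotv (V₀ - V₂) (V₀ - V₂) ∧
      2 * dotv (F - V₂) (V₁ - V₂) = dotv (V₁ - V₂) (V₁ - V₂) := by
  obtain ⟨h₁, h₂⟩ := hF
  simp only [dotv, Prod.fst_sub, Prod.snd_sub] at h₁ h₂ ⊢
  exact ⟨by linear_combination -h₂, by linear_combination h₁ - h₂⟩

lemma IsAcute.dotv_bounds {V₀ V₁ V₂ : ℤ × ℤ} (h : IsAcute V₀ V₁ V₂) :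
    0 < dotv (V₀ - V₂) (V₁ - V₂) ∧ dotv (V₀ - V₂) (V₁ - V₂) < dotv (V₀ - V₂) (V₀ - V₂) ∧
      dotv (V₀ - V₂) (V₁ - V₂) < dotv (V₁ - V₂) (V₁ - V₂) := by
  obtain ⟨h₀, h₁, h₂⟩ := h
  simp only [dotv, Prod.fst_sub, Prod.snd_sub] at h₀ h₁ h₂ ⊢
  exact ⟨by linarith, by linarith, by linarith⟩

theorem stmt12_general (V₀ V₁ V₂ F : ℤ × ℤ) (hacute : IsAcute V₀ V₁ V₂)
    (hF : IsCircumcenter F V₀ V₁ V₂)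
    (h01 : llen V₁ V₂ ≤ llen V₀ V₂) :
    3 ≤ llen V₀ V₂ := by
  by_contra! hlt
  obtain ⟨hs, hsa, hsb⟩ := hacute.dotv_bounds
  obtain ⟨ha, hb⟩ := hF.two_mul_dotv_eq
  set a := V₀ - V₂
  set b := V₁ - V₂
  have hA : dotv a a ≤ 2 * dotv (F - V₂) (F - V₂) :=
    dotv_self_le_two_mul_dotv_self ha (by change llen V₀ V₂ ≤ 2; omega)
      (ne_two_smul_of_dotv_lt hb hsb)
  have hB : dotv b b ≤ 2 * dotv (F - V₂) (F - V₂) :=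
    dotv_self_le_two_mul_dotv_self hb (by change llen V₁ V₂ ≤ 2; omega)
      (ne_two_smul_of_dotv_lt ha (dotv_comm b a ▸ hsa))
  have hcotA := sq_crossv_le_of_dotv_self_le ha hb (by linarith) hA
  have hcotB := sq_crossv_le_of_dotv_self_le hb ha (by linarith) hB
  rw [crossv_anticomm, neg_sq, dotv_comm b a] at hcotB
  exact false_of_sq_crossv_le hs hsa hsb hcotA hcotB

theorem stmt12 (V₀ V₁ V₂ F : ℤ × ℤ) (hacute : IsAcute V₀ V₁ V₂)
    (hF : IsCircumcenter F V₀ V₁ V₂)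
    (h01 : llen V₁ V₂ ≤ llen V₀ V₂) (h12 : llen V₀ V₂ ≤ llen V₀ V₁) :
    3 ≤ llen V₀ V₂ :=
  stmt12_general V₀ V₁ V₂ F hacute hF h01
end

section
/- For an integer ℓ, there exists an acute lattice triangle with lattice perimeter ℓ whose centroid is a lattice point, if and only if ℓ ≥ 3 and ℓ ∉ {5, 11}. -/
def HasAcuteCentroidTriangle (ℓ : ℕ) : Prop :=
  ∃ V₀ V₁ V₂ : ℤ × ℤ, IsAcute V₀ V₁ V₂ ∧
    (3 : ℤ) ∣ (V₀.1 + V₁.1 + V₂.1) ∧ (3 : ℤ) ∣ (V₀.2 + V₁.2 + V₂.2) ∧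
    latPerim V₀ V₁ V₂ = ℓ

section LatticeLength

variable {P Q R : ℤ × ℤ}

theorem llen_comm (P Q : ℤ × ℤ) : llen P Q = llen Q P := by
  rw [llen, llen, ← Int.gcd_neg, ← Int.neg_gcd, neg_sub, neg_sub]

theorem llen_eq_zero_iff : llen P Q = 0 ↔ P = Q := by
  rw [llen, Int.gcd_eq_zero_iff, sub_eq_zero, sub_eq_zero, Prod.ext_iff]

theorem dvd_llen_iff {d : ℕ} :
    d ∣ llen P Q ↔ (d : ℤ) ∣ P.1 - Q.1 ∧ (d : ℤ) ∣ P.2 - Q.2 :=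
  ⟨fun h => ⟨(Int.natCast_dvd_natCast.mpr h).trans (Int.gcd_dvd_left _ _),
      (Int.natCast_dvd_natCast.mpr h).trans (Int.gcd_dvd_right _ _)⟩,
    fun h => Int.dvd_gcd h.1 h.2⟩

theorem dvd_llen_of_dvd_of_dvd {d : ℕ} (hPQ : d ∣ llen P Q) (hQR : d ∣ llen Q R) :
    d ∣ llen R P := by
  rw [dvd_llen_iff] at *
  constructor
  · simpa using (dvd_add hPQ.1 hQR.1).neg_right
  · simpa using (dvd_add hPQ.2 hQR.2).neg_right

theorem gcd_llen_dvd_llen (P Q R : ℤ × ℤ) : (llen P Q).gcd (llen Q R) ∣ llen R P :=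
  dvd_llen_of_dvd_of_dvd (Nat.gcd_dvd_left _ _) (Nat.gcd_dvd_right _ _)

theorem three_dvd_llen_of_three_dvd_llen (hx : (3 : ℤ) ∣ P.1 + Q.1 + R.1)
    (hy : (3 : ℤ) ∣ P.2 + Q.2 + R.2) (h : 3 ∣ llen P Q) : 3 ∣ llen Q R := by
  rw [dvd_llen_iff] at *
  push_cast at *
  omega

theorem llen_smul (k : ℤ) (P Q : ℤ × ℤ) : llen (k • P) (k • Q) = k.natAbs * llen P Q := by
  simp only [llen, Prod.smul_fst, Prod.smul_snd, smul_eq_mul, ← mul_sub, Int.gcd_mul_left]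

end LatticeLength

theorem dotv_smul (k : ℤ) (u v : ℤ × ℤ) : dotv (k • u) (k • v) = k ^ 2 * dotv u v := by
  simp only [dotv, Prod.smul_fst, Prod.smul_snd, smul_eq_mul]
  ring

theorem IsAcute.llen_pos {V₀ V₁ V₂ : ℤ × ℤ} (h : IsAcute V₀ V₁ V₂) :
    0 < llen V₀ V₁ ∧ 0 < llen V₁ V₂ ∧ 0 < llen V₂ V₀ := by
  obtain ⟨h₀, h₁, h₂⟩ := h
  simp only [Nat.pos_iff_ne_zero, ne_eq, llen_eq_zero_iff]
  refine ⟨?_, ?_, ?_⟩ <;> rintro rfl <;> simp [dotv] at *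

theorem IsAcute.smul {V₀ V₁ V₂ : ℤ × ℤ} (h : IsAcute V₀ V₁ V₂) {k : ℤ} (hk : k ≠ 0) :
    IsAcute (k • V₀) (k • V₁) (k • V₂) := by
  obtain ⟨h₀, h₁, h₂⟩ := h
  simp only [IsAcute, ← smul_sub, dotv_smul]
  exact ⟨by positivity, by positivity, by positivity⟩

theorem add_add_ne_five_and_ne_eleven {a b c : ℕ} (ha : 0 < a) (hb : 0 < b) (hc : 0 < c)
    (hab : a.gcd b ∣ c) (hbc : b.gcd c ∣ a) (hca : c.gcd a ∣ b)
    (h3ab : 3 ∣ a → 3 ∣ b) (h3bc : 3 ∣ b → 3 ∣ c) (h3ca : 3 ∣ c → 3 ∣ a) :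
    a + b + c ≠ 5 ∧ a + b + c ≠ 11 := by
  have h2ab : 2 ∣ a → 2 ∣ b → 2 ∣ c := fun h h' => (Nat.dvd_gcd h h').trans hab
  have h2bc : 2 ∣ b → 2 ∣ c → 2 ∣ a := fun h h' => (Nat.dvd_gcd h h').trans hbc
  have h2ca : 2 ∣ c → 2 ∣ a → 2 ∣ b := fun h h' => (Nat.dvd_gcd h h').trans hca
  have coprime_six (hs : (a + b + c) % 6 = 5) :
      (a % 6 = 1 ∨ a % 6 = 5) ∧ (b % 6 = 1 ∨ b % 6 = 5) ∧ (c % 6 = 1 ∨ c % 6 = 5) := by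
    omega
  constructor <;> intro hs
  · omega
  · -- the only triples of numbers `≡ ±1 [MOD 6]` with sum `11`
    have : a = 1 ∧ b = 5 ∧ c = 5 ∨ a = 5 ∧ b = 1 ∧ c = 5 ∨ a = 5 ∧ b = 5 ∧ c = 1 := by omega
    rcases this with ⟨rfl, rfl, rfl⟩ | ⟨rfl, rfl, rfl⟩ | ⟨rfl, rfl, rfl⟩ <;>
      revert hab hbc hca <;> decide

theorem HasAcuteCentroidTriangle.three_le_and_ne {ℓ : ℕ} (h : HasAcuteCentroidTriangle ℓ) :
    3 ≤ ℓ ∧ ℓ ≠ 5 ∧ ℓ ≠ 11 := by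
  obtain ⟨V₀, V₁, V₂, hacute, hx, hy, rfl⟩ := h
  obtain ⟨h₀₁, h₁₂, h₂₀⟩ := hacute.llen_pos
  rw [latPerim, llen_comm V₀ V₂]
  refine ⟨by omega, add_add_ne_five_and_ne_eleven h₀₁ h₁₂ h₂₀ (gcd_llen_dvd_llen _ _ _)
    (gcd_llen_dvd_llen _ _ _) (gcd_llen_dvd_llen _ _ _) (three_dvd_llen_of_three_dvd_llen hx hy)
    (three_dvd_llen_of_three_dvd_llen ?_ ?_) (three_dvd_llen_of_three_dvd_llen ?_ ?_)⟩ <;> omega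

theorem HasAcuteCentroidTriangle.mul_left {ℓ : ℕ} (h : HasAcuteCentroidTriangle ℓ) {k : ℕ}
    (hk : 0 < k) : HasAcuteCentroidTriangle (k * ℓ) := by
  obtain ⟨V₀, V₁, V₂, hacute, hx, hy, rfl⟩ := h
  refine ⟨(k : ℤ) • V₀, (k : ℤ) • V₁, (k : ℤ) • V₂, hacute.smul (by omega), ?_, ?_, ?_⟩
  · simpa only [Prod.smul_fst, smul_eq_mul, ← mul_add] using dvd_mul_of_dvd_right hx _
  · simpa only [Prod.smul_snd, smul_eq_mul, ← mul_add] using dvd_mul_of_dvd_right hy _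
  · simp only [latPerim, llen_smul, Int.natAbs_natCast, mul_add]

theorem hasAcuteCentroidTriangle_three : HasAcuteCentroidTriangle 3 :=
  ⟨(0, 0), (2, 1), (1, 2), by norm_num [IsAcute, dotv, latPerim, llen]⟩

theorem hasAcuteCentroidTriangle_three_mul_add_four (m : ℕ) :
    HasAcuteCentroidTriangle (3 * m + 4) := by
  refine ⟨(0, 0), (3 * m + 2, 0), (1, 9 * m + 6), ⟨?_, ?_, ?_⟩, ⟨m + 1, by ring⟩,
    ⟨3 * m + 2, by ring⟩, ?_⟩
  · simp only [dotv, Prod.mk_sub_mk]; nlinarith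
  · simp only [dotv, Prod.mk_sub_mk]; nlinarith
  · simp only [dotv, Prod.mk_sub_mk]; nlinarith
  · have h₁₂ : Int.gcd (3 * m + 1) (9 * m + 6) = 1 :=
      Int.isCoprime_iff_gcd_eq_one.mp ⟨3 * m + 1, -m, by ring⟩
    simp only [latPerim, llen, show (3 * m + 2 : ℤ) - 1 = 3 * m + 1 by ring, zero_sub, sub_zero,
      Int.neg_gcd, Int.gcd_neg, Int.gcd_zero_right, Int.gcd_one_left, h₁₂]
    omega

/-- The triangle with sides `c • (3, 4)` and `b • (-3, 1)`: as `(3, 4) ⬝ (-3, 1) = -5`, it is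
acute exactly when `b < 5 * c` and `c < 2 * b`. -/
theorem hasAcuteCentroidTriangle_of_lt_of_lt {b c : ℕ} (hbc : b < 5 * c) (hcb : c < 2 * b)
    (hmod : b ≡ c [MOD 3]) :
    HasAcuteCentroidTriangle (Int.gcd (3 * ((c : ℤ) - b)) (4 * c + b) + b + c) := by
  unfold Nat.ModEq at hmod
  refine ⟨(0, 0), (3 * (c - b), 4 * c + b), (3 * c, 4 * c), ⟨?_, ?_, ?_⟩, by omega, by omega, ?_⟩
  · have : (0 : ℤ) < 5 * c * (5 * c - b) := mul_pos (by omega) (by omega)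
    simp only [dotv, Prod.mk_sub_mk]
    linarith
  · have : (0 : ℤ) < 5 * b * (2 * b - c) := mul_pos (by omega) (by omega)
    simp only [dotv, Prod.mk_sub_mk]
    linarith
  · have : (0 : ℤ) < 5 * b * c := mul_pos (by omega) (by omega)
    simp only [dotv, Prod.mk_sub_mk]
    linarith
  · have h₁₂ : Int.gcd (3 * (c - b) - 3 * c) (4 * c + b - 4 * c) = b := by
      rw [show (3 * (c - b) - 3 * c : ℤ) = b * (-3) by ring,
        show (4 * c + b - 4 * c : ℤ) = b * 1 by ring, Int.gcd_mul_left, Int.natAbs_natCast]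
      norm_num
    have h₀₂ : Int.gcd (3 * c) (4 * c) = c := by
      rw [mul_comm 3, mul_comm 4, Int.gcd_mul_left, Int.natAbs_natCast]
      norm_num
    simp only [latPerim, llen, h₁₂, h₀₂, zero_sub, Int.neg_gcd, Int.gcd_neg]

theorem Int.gcd_eq_one_of_dvd_six_pow {d x : ℤ} {n : ℕ} (hd : d ∣ 6 ^ n) (hx : x ≡ 1 [ZMOD 6]) :
    d.gcd x = 1 := by
  obtain ⟨k, hk⟩ := (Int.ModEq.dvd hx.symm)
  have h6 : IsCoprime 6 x := ⟨-k, 1, by linarith⟩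
  exact Int.isCoprime_iff_gcd_eq_one.mp (h6.pow_left.of_isCoprime_of_dvd_left hd)

theorem hasAcuteCentroidTriangle_twelve_mul_add_seventeen (m : ℕ) :
    HasAcuteCentroidTriangle (12 * m + 17) := by
  have h := hasAcuteCentroidTriangle_of_lt_of_lt (b := 6 * m + 11) (c := 6 * m + 5)
    (by omega) (by omega) (by simp only [Nat.ModEq]; omega)
  rwa [Int.gcd_eq_one_of_dvd_six_pow (n := 2) ⟨-2, by push_cast; ring⟩
    (Int.modEq_iff_dvd.mpr ⟨-(5 * m + 5), by push_cast; ring⟩),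
    show 1 + (6 * m + 11) + (6 * m + 5) = 12 * m + 17 by ring] at h

theorem hasAcuteCentroidTriangle_twelve_mul_add_twenty_three (m : ℕ) :
    HasAcuteCentroidTriangle (12 * m + 23) := by
  have h := hasAcuteCentroidTriangle_of_lt_of_lt (b := 6 * m + 17) (c := 6 * m + 5)
    (by omega) (by omega) (by simp only [Nat.ModEq]; omega)
  rwa [Int.gcd_eq_one_of_dvd_six_pow (n := 2) ⟨-1, by push_cast; ring⟩
    (Int.modEq_iff_dvd.mpr ⟨-(5 * m + 6), by push_cast; ring⟩),
    show 1 + (6 * m + 17) + (6 * m + 5) = 12 * m + 23 by ring] at h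

theorem hasAcuteCentroidTriangle_of_three_le {ℓ : ℕ} (h3 : 3 ≤ ℓ) (h5 : ℓ ≠ 5) (h11 : ℓ ≠ 11) :
    HasAcuteCentroidTriangle ℓ := by
  rcases (by omega : ℓ % 3 = 0 ∨ ℓ % 3 = 1 ∨ ℓ % 6 = 2 ∨ ℓ % 12 = 5 ∨ ℓ % 12 = 11)
    with h | h | h | h | h
  · obtain ⟨k, rfl⟩ : ∃ k, ℓ = k * 3 := ⟨ℓ / 3, by omega⟩
    exact hasAcuteCentroidTriangle_three.mul_left (by omega)
  · obtain ⟨m, rfl⟩ : ∃ m, ℓ = 3 * m + 4 := ⟨(ℓ - 4) / 3, by omega⟩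
    exact hasAcuteCentroidTriangle_three_mul_add_four m
  · obtain ⟨m, rfl⟩ : ∃ m, ℓ = 2 * (3 * m + 4) := ⟨(ℓ - 8) / 6, by omega⟩
    exact (hasAcuteCentroidTriangle_three_mul_add_four m).mul_left two_pos
  · obtain ⟨m, rfl⟩ : ∃ m, ℓ = 12 * m + 17 := ⟨(ℓ - 17) / 12, by omega⟩
    exact hasAcuteCentroidTriangle_twelve_mul_add_seventeen m
  · obtain ⟨m, rfl⟩ : ∃ m, ℓ = 12 * m + 23 := ⟨(ℓ - 23) / 12, by omega⟩
    exact hasAcuteCentroidTriangle_twelve_mul_add_twenty_three m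

theorem stmt18 (ℓ : ℕ) :
    (∃ V₀ V₁ V₂ : ℤ × ℤ, IsAcute V₀ V₁ V₂ ∧
      (3 : ℤ) ∣ (V₀.1 + V₁.1 + V₂.1) ∧ (3 : ℤ) ∣ (V₀.2 + V₁.2 + V₂.2) ∧
      latPerim V₀ V₁ V₂ = ℓ) ↔ (3 ≤ ℓ ∧ ℓ ≠ 5 ∧ ℓ ≠ 11) :=
  ⟨HasAcuteCentroidTriangle.three_le_and_ne,
    fun ⟨h3, h5, h11⟩ => hasAcuteCentroidTriangle_of_three_le h3 h5 h11⟩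
end
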